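/- Let V : ℤ → ℝ be periodic with period p ≥ 1 and let Δ be its discriminant. Then the set {E ∈ ℝ : |Δ(E)| ≤ 2} is the union of p closed intervals with nonempty interior (the bands) such that on each band Δ is either strictly increasing or strictly decreasing, and Δ maps each band onto [−2,2]. -/

import Mathlib

/-- The transfer matrix over `n` sites: `T_n^{(E,V)} = S_{n-1} ⋯ S_0`, where
`S_i^{(E,V)} = !![E - V i, -1; 1, 0]`. -/
def transferMatrix (E : ℝ) (V : ℤ → ℝ) : ℕ → Matrix (Fin 2) (Fin 2) ℝ
  | 0 => 1
  | n + 1 => !![E - V n, -1; 1, 0] * transferMatrix E V n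

/-- The discriminant `Δ(E) = tr T_p^{(E,V)}` of a `p`-periodic potential. -/
def discriminant (V : ℤ → ℝ) (p : ℕ) (E : ℝ) : ℝ :=
  (transferMatrix E V p).trace

/-!
Over `ℝ[X]` the transfer matrix has determinant one and its trace `Δ` is a polynomial of degree
`p`. Differentiating the product `T_p = S_{p-1} ⋯ S_0` gives `Δ' = -∑ₖ (T_k T_p T_k⁻¹)₀₁`. When
`|Δ(E)| < 2` the matrix `T_p(E)` is elliptic, so all its `SL₂(ℝ)`-conjugates have `(0,1)` entries
of one sign and `Δ'(E) ≠ 0`. If `Δ(z) = 0` then `i` is an eigenvalue of `T_p(z)`, and summing by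
parts along the corresponding Floquet solution `u` gives `Im z · ∑ |u_n|² = 0`: all `p` roots of
`Δ` are real, and simple by the previous point.

The rest is real analysis of such a polynomial. Rolle's theorem between consecutive roots accounts
for all `p - 1` critical points, so every real `E` is joined to some root by a segment free of
critical points, on which `Δ` is strictly monotone. Around each root take the largest open
interval on which `|Δ| < 2`: its closure is a band, and the bands cover `{|Δ| ≤ 2}`.
-/

open Polynomial Matrix Set Filter Topology

section TransferMatrix

variable {A B : Type*} [CommRing A] [Algebra ℝ A] [CommRing B] [Algebra ℝ B] (V : ℤ → ℝ)

-- The spectral parameter lives in any `ℝ`-algebra: `z = X` in `ℝ[X]` makes `Δ` a polynomial,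
-- and `z ∈ ℂ` gives complex energies.
def algTransferMatrix (z : A) : ℕ → Matrix (Fin 2) (Fin 2) A
  | 0 => 1
  | n + 1 => !![z - algebraMap ℝ A (V n), -1; 1, 0] * algTransferMatrix z n

theorem det_algTransferMatrix (z : A) (n : ℕ) : (algTransferMatrix V z n).det = 1 := by
  induction n with
  | zero => simp [algTransferMatrix]
  | succ n ih => rw [algTransferMatrix, det_mul, ih, det_fin_two_of]; ring

theorem algTransferMatrix_succ_zero (z : A) (n : ℕ) (j : Fin 2) :
    algTransferMatrix V z (n + 1) 0 j =
      (z - algebraMap ℝ A (V n)) * algTransferMatrix V z n 0 j - algTransferMatrix V z n 1 j := by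
  simp [algTransferMatrix, mul_apply, Fin.sum_univ_two, sub_eq_add_neg]

theorem algTransferMatrix_succ_one (z : A) (n : ℕ) (j : Fin 2) :
    algTransferMatrix V z (n + 1) 1 j = algTransferMatrix V z n 0 j := by
  simp [algTransferMatrix, mul_apply, Fin.sum_univ_two]

theorem algTransferMatrix_succ_mulVec_zero (z : A) (n : ℕ) (v : Fin 2 → A) :
    (algTransferMatrix V z (n + 1) *ᵥ v) 0 =
      (z - algebraMap ℝ A (V n)) * (algTransferMatrix V z n *ᵥ v) 0 -
        (algTransferMatrix V z n *ᵥ v) 1 := by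
  simp only [mulVec, dotProduct, Fin.sum_univ_two, algTransferMatrix_succ_zero]
  ring

theorem algTransferMatrix_succ_mulVec_one (z : A) (n : ℕ) (v : Fin 2 → A) :
    (algTransferMatrix V z (n + 1) *ᵥ v) 1 = (algTransferMatrix V z n *ᵥ v) 0 := by
  simp only [mulVec, dotProduct, Fin.sum_univ_two, algTransferMatrix_succ_one]

theorem AlgHom.mapMatrix_algTransferMatrix (φ : A →ₐ[ℝ] B) (z : A) (n : ℕ) :
    φ.mapMatrix (algTransferMatrix V z n) = algTransferMatrix V (φ z) n := by
  induction n with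
  | zero => simp [algTransferMatrix]
  | succ n ih =>
    rw [algTransferMatrix, algTransferMatrix, map_mul, ih]
    congr 1
    ext i j
    fin_cases i <;> fin_cases j <;> simp

theorem algTransferMatrix_eq_transferMatrix (E : ℝ) (n : ℕ) :
    algTransferMatrix V E n = transferMatrix E V n := by
  induction n with
  | zero => rfl
  | succ n ih => simp [algTransferMatrix, transferMatrix, ih]

noncomputable def discriminantPoly (p : ℕ) : ℝ[X] := (algTransferMatrix V (X : ℝ[X]) p).trace

theorem aeval_discriminantPoly (p : ℕ) (z : A) :
    aeval z (discriminantPoly V p) = (algTransferMatrix V z p).trace := by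
  rw [discriminantPoly, AddMonoidHom.map_trace, ← AlgHom.mapMatrix_apply,
    AlgHom.mapMatrix_algTransferMatrix, aeval_X]

theorem discriminant_eq_eval (p : ℕ) :
    discriminant V p = fun E => (discriminantPoly V p).eval E := by
  ext E
  rw [← coe_aeval_eq_eval, aeval_discriminantPoly, algTransferMatrix_eq_transferMatrix,
    discriminant]

end TransferMatrix

section PolynomialTransferMatrix

variable (V : ℤ → ℝ)

local notation "T" => algTransferMatrix V (X : ℝ[X])

theorem natDegree_algTransferMatrix_le (n : ℕ) (i j : Fin 2) : (T n i j).natDegree ≤ n := by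
  induction n generalizing i j with
  | zero => by_cases h : i = j <;> simp [algTransferMatrix, one_apply, h]
  | succ n ih =>
    fin_cases i
    · rw [Fin.zero_eta, algTransferMatrix_succ_zero, algebraMap_eq]
      refine (natDegree_sub_le _ _).trans (max_le ?_ ((ih 1 j).trans n.le_succ))
      exact natDegree_mul_le.trans (by linarith [natDegree_X_sub_C_le (V n), ih 0 j])
    · exact (algTransferMatrix_succ_one V (X : ℝ[X]) n j).symm ▸ (ih 0 j).trans n.le_succ

theorem coeff_algTransferMatrix_zero_zero (n : ℕ) : (T n 0 0).coeff n = 1 := by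
  induction n with
  | zero => simp [algTransferMatrix]
  | succ n ih =>
    have hlt : ∀ i j, (T n i j).natDegree < n + 1 := fun i j =>
      (natDegree_algTransferMatrix_le V n i j).trans_lt n.lt_succ_self
    rw [algTransferMatrix_succ_zero, algebraMap_eq, coeff_sub, sub_mul, coeff_sub, coeff_X_mul,
      coeff_C_mul, ih, coeff_eq_zero_of_natDegree_lt (hlt 0 0),
      coeff_eq_zero_of_natDegree_lt (hlt 1 0)]
    ring

theorem natDegree_discriminantPoly {p : ℕ} (hp : p ≠ 0) :
    (discriminantPoly V p).natDegree = p := by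
  obtain ⟨n, rfl⟩ := Nat.exists_eq_succ_of_ne_zero hp
  have htrace : discriminantPoly V (n + 1) = T (n + 1) 0 0 + T n 0 1 := by
    rw [discriminantPoly, trace_fin_two, algTransferMatrix_succ_one]
  apply natDegree_eq_of_le_of_coeff_ne_zero
  · rw [htrace]
    exact natDegree_add_le_of_degree_le (natDegree_algTransferMatrix_le V (n + 1) 0 0)
      ((natDegree_algTransferMatrix_le V n 0 1).trans n.le_succ)
  · rw [htrace, coeff_add, coeff_algTransferMatrix_zero_zero,
      coeff_eq_zero_of_natDegree_lt
        ((natDegree_algTransferMatrix_le V n 0 1).trans_lt n.lt_succ_self)]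
    norm_num

theorem Matrix.map_derivative_mul (M N : Matrix (Fin 2) (Fin 2) ℝ[X]) :
    (M * N).map derivative = M.map derivative * N + M * N.map derivative := by
  ext i j : 1
  simp only [map_apply, mul_apply, Fin.sum_univ_two, derivative_add, derivative_mul, add_apply]
  ring

theorem adjugate_mul_map_derivative_algTransferMatrix (n : ℕ) :
    adjugate (T n) * (T n).map derivative =
      ∑ k ∈ Finset.range n, adjugate (T k) * !![0, 0; -1, 0] * T k := by
  induction n with
  | zero => ext i j : 1; by_cases h : i = j <;> simp [algTransferMatrix, one_apply, h]
  | succ n ih =>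
    set S : Matrix (Fin 2) (Fin 2) ℝ[X] := !![X - C (V n), -1; 1, 0]
    have hT : T (n + 1) = S * T n := by simp [algTransferMatrix, S]
    have hS : adjugate S * S = 1 := by
      rw [adjugate_mul, det_fin_two_of]
      simp
    have hS' : adjugate S * S.map derivative = !![0, 0; -1, 0] := by
      have hDS : S.map derivative = !![1, 0; 0, 0] := by
        ext i j : 1
        fin_cases i <;> fin_cases j <;> simp [S]
      rw [hDS, adjugate_fin_two_of, mul_fin_two]
      simp
    rw [Finset.sum_range_succ, ← ih, hT, adjugate_mul_distrib, map_derivative_mul]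
    calc adjugate (T n) * adjugate S * (S.map derivative * T n + S * (T n).map derivative)
        = adjugate (T n) * (adjugate S * S) * (T n).map derivative +
            adjugate (T n) * (adjugate S * S.map derivative) * T n := by noncomm_ring
      _ = _ := by rw [hS, hS', mul_one]

theorem derivative_discriminantPoly (p : ℕ) :
    derivative (discriminantPoly V p) =
      -∑ k ∈ Finset.range p, (T k * T p * adjugate (T k)) 0 1 := by
  have hT : (T p).map derivative = T p * (adjugate (T p) * (T p).map derivative) := by
    rw [← mul_assoc, mul_adjugate, det_algTransferMatrix, one_smul, one_mul]
  calc derivative (discriminantPoly V p) = ((T p).map derivative).trace := by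
        simp [discriminantPoly, trace_fin_two]
    _ = ∑ k ∈ Finset.range p, (T k * T p * adjugate (T k) * !![0, 0; -1, 0]).trace := by
        rw [hT, adjugate_mul_map_derivative_algTransferMatrix, Finset.mul_sum, trace_sum]
        refine Finset.sum_congr rfl fun k _ => ?_
        rw [← mul_assoc, trace_mul_comm, ← mul_assoc, ← mul_assoc]
    _ = _ := by
        rw [← Finset.sum_neg_distrib]
        refine Finset.sum_congr rfl fun k _ => ?_
        simp [trace_fin_two, mul_apply, Fin.sum_univ_two]

end PolynomialTransferMatrix

theorem Matrix.pos_mul_conj_apply_zero_one {M g : Matrix (Fin 2) (Fin 2) ℝ} (hM : M.det = 1)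
    (htr : |M.trace| < 2) (hg : g.det ≠ 0) : 0 < M 0 1 * (g * M * adjugate g) 0 1 := by
  have hentry : (g * M * adjugate g) 0 1 =
      M 0 1 * g 0 0 ^ 2 + (M 1 1 - M 0 0) * g 0 0 * g 0 1 - M 1 0 * g 0 1 ^ 2 := by
    simp only [adjugate_fin_two, mul_apply, Fin.sum_univ_two, of_apply, cons_val', cons_val_one,
      cons_val_fin_one, cons_val_zero, mul_neg]
    ring
  rw [det_fin_two] at hM hg
  rw [trace_fin_two, abs_lt] at htr
  rw [hentry]
  have htr' : 0 < 4 - (M 0 0 + M 1 1) ^ 2 := by nlinarith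
  -- completing the square: the form is definite because its discriminant is `tr² - 4 < 0`
  have hsq : 4 * (M 0 1 * (M 0 1 * g 0 0 ^ 2 + (M 1 1 - M 0 0) * g 0 0 * g 0 1 -
      M 1 0 * g 0 1 ^ 2)) = (2 * M 0 1 * g 0 0 + (M 1 1 - M 0 0) * g 0 1) ^ 2 +
        (4 - (M 0 0 + M 1 1) ^ 2) * g 0 1 ^ 2 := by linear_combination (4 * g 0 1 ^ 2) * hM
  rcases eq_or_ne (g 0 1) 0 with hβ | hβ
  · have hα : g 0 0 ≠ 0 := fun hα => hg (by simp [hα, hβ])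
    have hb : M 0 1 ≠ 0 := fun hb => by
      rw [hb] at hM
      nlinarith [sq_nonneg (M 0 0 - M 1 1)]
    rw [hβ] at hsq ⊢
    nlinarith [sq_pos_of_ne_zero (mul_ne_zero hb hα)]
  · nlinarith [sq_nonneg (2 * M 0 1 * g 0 0 + (M 1 1 - M 0 0) * g 0 1),
      mul_pos htr' (sq_pos_of_ne_zero hβ)]

theorem not_isRoot_derivative_discriminantPoly (V : ℤ → ℝ) {p : ℕ} (hp : p ≠ 0) {E : ℝ}
    (hE : |(discriminantPoly V p).eval E| < 2) :
    ¬ (derivative (discriminantPoly V p)).IsRoot E := by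
  set M := algTransferMatrix V E p
  set G := algTransferMatrix V E
  have hterm : ∀ k, 0 < M 0 1 * (G k * M * adjugate (G k)) 0 1 := fun k =>
    pos_mul_conj_apply_zero_one (det_algTransferMatrix V E p)
      (by rwa [← aeval_discriminantPoly, coe_aeval_eq_eval])
      (by rw [det_algTransferMatrix]; exact one_ne_zero)
  have heval : (derivative (discriminantPoly V p)).eval E =
      -∑ k ∈ Finset.range p, (G k * M * adjugate (G k)) 0 1 := by
    rw [derivative_discriminantPoly, ← coe_aeval_eq_eval, map_neg, map_sum]
    refine congrArg _ (Finset.sum_congr rfl fun k _ => ?_)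
    change ((aeval E).mapMatrix _) 0 1 = _
    rw [map_mul, map_mul, AlgHom.map_adjugate, AlgHom.mapMatrix_algTransferMatrix,
      AlgHom.mapMatrix_algTransferMatrix, aeval_X]
  have hpos : 0 < M 0 1 * ∑ k ∈ Finset.range p, (G k * M * adjugate (G k)) 0 1 := by
    rw [Finset.mul_sum]
    exact Finset.sum_pos (fun k _ => hterm k) (Finset.nonempty_range_iff.mpr hp)
  intro h
  rw [IsRoot.def, heval, neg_eq_zero] at h
  rw [h, mul_zero] at hpos
  exact hpos.false

open ComplexConjugate in
theorem im_eq_zero_of_floquet {z μ : ℂ} (hμ : ‖μ‖ = 1) {a : ℕ → ℝ} {u : ℕ → ℂ} {p : ℕ}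
    (hp : p ≠ 0) (hu : u 0 ≠ 0 ∨ u 1 ≠ 0)
    (hrec : ∀ n, u (n + 2) = (z - a n) * u (n + 1) - u n)
    (hp₀ : u p = μ * u 0) (hp₁ : u (p + 1) = μ * u 1) : z.im = 0 := by
  set g : ℕ → ℂ := fun n => conj (u n) * u (n + 1)
  have hg : g p = g 0 := by
    have hμ' : conj μ * μ = 1 := by
      rw [mul_comm, Complex.mul_conj, Complex.normSq_eq_norm_sq, hμ]
      norm_num
    simp only [g, hp₀, hp₁, map_mul]
    linear_combination (conj (u 0) * u 1) * hμ'
  have hterm : ∀ n, (z - a n) * Complex.normSq (u (n + 1)) = g (n + 1) + conj (g n) := by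
    intro n
    simp only [g, hrec, map_mul, Complex.conj_conj, Complex.normSq_eq_conj_mul_self]
    ring
  have hshift : ∑ n ∈ Finset.range p, g (n + 1) = ∑ n ∈ Finset.range p, g n := by
    linear_combination -(Finset.sum_range_succ' g p) + Finset.sum_range_succ g p + hg
  -- summation by parts: the quadratic form of the recurrence is real
  have hsum : ∑ n ∈ Finset.range p, (z - a n) * Complex.normSq (u (n + 1)) =
      (∑ n ∈ Finset.range p, g n) + conj (∑ n ∈ Finset.range p, g n) := by
    simp_rw [hterm, Finset.sum_add_distrib, map_sum, hshift]
  have him : z.im * ∑ n ∈ Finset.range p, Complex.normSq (u (n + 1)) = 0 := by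
    simpa [Complex.im_sum, Finset.mul_sum, Complex.add_conj] using congrArg Complex.im hsum
  refine (mul_eq_zero.mp him).resolve_right fun h0 => ?_
  have hzero : ∀ n < p, u (n + 1) = 0 := fun n hn => Complex.normSq_eq_zero.mp
    ((Finset.sum_eq_zero_iff_of_nonneg fun _ _ => Complex.normSq_nonneg _).mp h0 n
      (Finset.mem_range.mpr hn))
  have hu1 : u 1 = 0 := hzero 0 (Nat.pos_of_ne_zero hp)
  have hu0 : u 0 = 0 := by
    have hμ0 : μ ≠ 0 := by rintro rfl; simp at hμ
    have := hzero (p - 1) (by omega)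
    rw [Nat.sub_add_cancel (Nat.one_le_iff_ne_zero.mpr hp), hp₀] at this
    exact (mul_eq_zero.mp this).resolve_left hμ0
  exact hu.elim (· hu0) (· hu1)

theorem im_eq_zero_of_aeval_discriminantPoly_eq_zero (V : ℤ → ℝ) {p : ℕ} (hp : p ≠ 0) {z : ℂ}
    (hz : aeval z (discriminantPoly V p) = 0) : z.im = 0 := by
  set M := algTransferMatrix V z p
  -- `det M = 1` and `tr M = 0`, so `I` is an eigenvalue of `M`
  have hdet : (M - Complex.I • 1).det = 0 := by
    have h1 := det_algTransferMatrix V z p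
    have h2 : M.trace = 0 := by rw [← aeval_discriminantPoly, hz]
    rw [det_fin_two] at h1 ⊢
    rw [trace_fin_two] at h2
    simp only [Matrix.sub_apply, Matrix.smul_apply, one_apply_eq, one_apply_ne zero_ne_one,
      one_apply_ne one_ne_zero, smul_eq_mul, mul_one, mul_zero, sub_zero]
    linear_combination h1 - Complex.I * h2 + Complex.I_sq
  obtain ⟨v, hv, hMv⟩ := exists_mulVec_eq_zero_iff.mpr hdet
  rw [sub_mulVec, smul_mulVec, one_mulVec, sub_eq_zero] at hMv
  set u : ℕ → ℂ := fun n => (algTransferMatrix V z n *ᵥ v) 1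
  have hu_succ : ∀ n, u (n + 1) = (algTransferMatrix V z n *ᵥ v) 0 := fun n =>
    algTransferMatrix_succ_mulVec_one V z n v
  have hu0 : u 0 = v 1 := by simp [u, algTransferMatrix]
  have hu1 : u 1 = v 0 := by simp [hu_succ, algTransferMatrix]
  refine im_eq_zero_of_floquet (μ := Complex.I) (a := fun n => V n) (u := u) (by simp) hp ?_
    (fun n => by rw [hu_succ, hu_succ]; exact algTransferMatrix_succ_mulVec_zero V z n v)
    (by rw [hu0]; exact congrFun hMv 1)
    (by rw [hu_succ, hu1]; exact congrFun hMv 0)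
  by_contra! h
  exact hv (by ext i; fin_cases i <;> simp [← hu0, ← hu1, h.1, h.2])

theorem exists_first_hit {g : ℝ → ℝ} (hg : Continuous g) {r x₀ c : ℝ} (hr : g r < c)
    (hx₀ : r ≤ x₀) (hc : c ≤ g x₀) :
    ∃ b, r < b ∧ g b = c ∧ ∀ x ∈ Ico r b, g x < c := by
  set S := {x | r ≤ x ∧ c ≤ g x}
  have hbdd : BddBelow S := ⟨r, fun x hx => hx.1⟩
  obtain ⟨hrb, hcb⟩ : sInf S ∈ S :=
    (isClosed_Ici.inter (isClosed_le continuous_const hg)).csInf_mem ⟨x₀, hx₀, hc⟩ hbdd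
  have hlt : ∀ x ∈ Ico r (sInf S), g x < c := fun x hx =>
    lt_of_not_ge fun h => hx.2.not_ge (csInf_le hbdd ⟨hx.1, h⟩)
  have hrb' : r < sInf S := hrb.lt_of_ne fun h => (h ▸ hcb).not_gt hr
  refine ⟨sInf S, hrb', le_antisymm ?_ hcb, hlt⟩
  exact le_of_tendsto (hg.continuousAt.tendsto.mono_left nhdsWithin_le_nhds)
    (eventually_of_mem (Ioo_mem_nhdsLT hrb') fun x hx => (hlt x ⟨hx.1.le, hx.2⟩).le)

theorem abs_lt_abs_of_mem_uIcc {g : ℝ → ℝ} {r E x : ℝ}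
    (hg : StrictMonoOn g (uIcc r E) ∨ StrictAntiOn g (uIcc r E)) (hr : g r = 0)
    (hx : x ∈ uIcc r E) (hxE : x ≠ E) : |g x| < |g E| := by
  wlog hmono : StrictMonoOn g (uIcc r E) generalizing g
  · have hneg : StrictMonoOn (-g) (uIcc r E) := fun a ha b hb hab =>
      neg_lt_neg (hg.resolve_left hmono ha hb hab)
    simpa using this (Or.inl hneg) (by simp [hr]) hneg
  rcases mem_uIcc.mp hx with ⟨hrx, hxE'⟩ | ⟨hEx, hxr⟩
  · have h0 : 0 ≤ g x := hr ▸ hmono.monotoneOn left_mem_uIcc hx hrx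
    have h1 : g x < g E := hmono hx right_mem_uIcc (hxE'.lt_of_ne hxE)
    rw [abs_of_nonneg h0, abs_of_pos (h0.trans_lt h1)]
    exact h1
  · have h0 : g x ≤ 0 := hr ▸ hmono.monotoneOn hx left_mem_uIcc hxr
    have h1 : g E < g x := hmono right_mem_uIcc hx (hEx.lt_of_ne hxE.symm)
    rw [abs_of_nonpos h0, abs_of_neg (h1.trans_le h0)]
    exact neg_lt_neg h1

theorem image_Icc_eq_Icc_of_abs_eq {g : ℝ → ℝ} {a b c : ℝ} (hab : a < b)
    (hg : ContinuousOn g (Icc a b)) (hinj : InjOn g (Icc a b))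
    (ha : |g a| = c) (hb : |g b| = c) (hlt : ∀ x ∈ Ioo a b, |g x| < c) :
    g '' Icc a b = Icc (-c) c := by
  have hc : 0 ≤ c := ha ▸ abs_nonneg _
  have hne : g a ≠ g b := fun h =>
    hab.ne (hinj (left_mem_Icc.mpr hab.le) (right_mem_Icc.mpr hab.le) h)
  refine Subset.antisymm ?_ ?_
  · rintro _ ⟨x, hx, rfl⟩
    rw [mem_Icc, ← abs_le]
    rcases eq_endpoints_or_mem_Ioo_of_mem_Icc hx with rfl | rfl | hx
    exacts [ha.le, hb.le, (hlt x hx).le]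
  · have hivt := intermediate_value_uIcc (uIcc_of_le hab.le ▸ hg)
    rw [uIcc_of_le hab.le] at hivt
    refine (Eq.subset ?_).trans hivt
    rcases (abs_eq hc).mp ha with ha' | ha' <;> rcases (abs_eq hc).mp hb with hb' | hb'
    · exact absurd (ha'.trans hb'.symm) hne
    · rw [ha', hb', uIcc_of_ge (by linarith)]
    · rw [ha', hb', uIcc_of_le (by linarith)]
    · exact absurd (ha'.trans hb'.symm) hne

namespace Polynomial

variable {f : ℝ[X]}

theorem card_roots_toFinset_eq_natDegree (hf0 : f ≠ 0)
    (hreal : ∀ z : ℂ, aeval z f = 0 → z.im = 0)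
    (hsimple : ∀ x, f.IsRoot x → ¬ f.derivative.IsRoot x) :
    f.roots.toFinset.card = f.natDegree := by
  set q := f.map (algebraMap ℝ ℂ)
  have hq0 : q ≠ 0 := Polynomial.map_ne_zero hf0
  have hcard : Multiset.card q.roots = f.natDegree := by
    rw [← natDegree_map (algebraMap ℝ ℂ)]
    exact splits_iff_card_roots.mp (IsAlgClosed.splits q)
  have hre : ∀ z ∈ q.roots, (z.re : ℂ) = z := fun z hz => by
    rw [mem_roots hq0, IsRoot, eval_map_algebraMap] at hz
    exact Complex.ext rfl (by simp [hreal z hz])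
  have heval : ∀ (g : ℝ[X]) (x : ℝ), (g.map (algebraMap ℝ ℂ)).eval (x : ℂ) = g.eval x := by
    intro g x
    rw [eval_map_algebraMap, ← Complex.coe_algebraMap, aeval_algebraMap_apply, coe_aeval_eq_eval]
  have hisRoot : ∀ (g : ℝ[X]), ∀ z ∈ q.roots, (g.map (algebraMap ℝ ℂ)).IsRoot z → g.IsRoot z.re :=
    fun g z hz h => by rwa [IsRoot, ← hre z hz, heval, Complex.ofReal_eq_zero] at h
  have hroot : ∀ z ∈ q.roots, f.IsRoot z.re := fun z hz => hisRoot f z hz ((mem_roots hq0).mp hz)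
  have hnodup : q.roots.Nodup := by
    refine Multiset.nodup_iff_count_le_one.mpr fun z => not_lt.mp fun h => ?_
    have hz : z ∈ q.roots := Multiset.count_pos.mp (by omega)
    rw [count_roots, one_lt_rootMultiplicity_iff_isRoot hq0, derivative_map] at h
    exact hsimple z.re (hroot z hz) (hisRoot _ z hz h.2)
  refine le_antisymm ((Multiset.toFinset_card_le _).trans (card_roots' f)) ?_
  calc f.natDegree = q.roots.toFinset.card := by
        rw [Multiset.toFinset_card_of_nodup hnodup, hcard]
    _ ≤ f.roots.toFinset.card := Finset.card_le_card_of_injOn Complex.re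
        (fun z hz => Multiset.mem_toFinset.mpr ((mem_roots hf0).mpr
          (hroot z (Multiset.mem_toFinset.mp hz))))
        (fun z hz w hw h => by
          rw [← hre z (Multiset.mem_toFinset.mp hz), ← hre w (Multiset.mem_toFinset.mp hw), h])

theorem exists_isRoot_derivative_mem_Ioo {x y : ℝ} (hxy : x < y) (h : f.eval x = f.eval y) :
    ∃ z ∈ Ioo x y, f.derivative.IsRoot z := by
  obtain ⟨z, hz, hz'⟩ := exists_deriv_eq_zero hxy f.continuousOn h
  exact ⟨z, hz, by rwa [Polynomial.deriv] at hz'⟩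

theorem strictMonoOn_or_strictAntiOn_Icc {u v : ℝ} (huv : u ≤ v)
    (h : ∀ x ∈ Ioo u v, ¬ f.derivative.IsRoot x) :
    StrictMonoOn (f.eval ·) (Icc u v) ∨ StrictAntiOn (f.eval ·) (Icc u v) := by
  refine f.continuousOn.strictMonoOn_of_injOn_Icc' huv fun x hx y hy hxy => ?_
  by_contra hne
  wlog hlt : x < y generalizing x y
  · exact this y hy x hx hxy.symm (Ne.symm hne) ((not_lt.mp hlt).lt_of_ne (Ne.symm hne))
  obtain ⟨z, hz, hz'⟩ := exists_isRoot_derivative_mem_Ioo hlt hxy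
  exact h z ⟨hx.1.trans_lt hz.1, hz.2.trans_le hy.2⟩ hz'

theorem exists_mem_roots_forall_not_isRoot_derivative (hdeg : 0 < f.natDegree)
    (hroots : f.roots.toFinset.card = f.natDegree) (E : ℝ) :
    ∃ r ∈ f.roots.toFinset, ∀ x ∈ uIoo r E, ¬ f.derivative.IsRoot x := by
  have hf0 : f ≠ 0 := ne_zero_of_natDegree_gt hdeg
  have hf'0 : f.derivative ≠ 0 := derivative_ne_zero.mpr hdeg.ne'
  -- otherwise `E` and the roots are separated by critical points, `natDegree f` of them
  by_contra! h
  have hE : E ∉ f.roots.toFinset := fun hE => by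
    obtain ⟨x, hx, -⟩ := h E hE
    simp at hx
  have hcard := Finset.card_le_of_interleaved (s := insert E f.roots.toFinset)
    (t := f.derivative.roots.toFinset) fun x hx y hy hxy _ => by
      suffices ∃ z ∈ Ioo x y, f.derivative.IsRoot z by
        obtain ⟨z, hz, hz'⟩ := this
        exact ⟨z, Multiset.mem_toFinset.mpr ((mem_roots hf'0).mpr hz'), hz⟩
      rcases Finset.mem_insert.mp hx with rfl | hxr <;>
        rcases Finset.mem_insert.mp hy with rfl | hyr
      · exact absurd hxy (lt_irrefl _)
      · simpa [uIoo_of_gt hxy] using h y hyr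
      · simpa [uIoo_of_lt hxy] using h x hxr
      · rw [Multiset.mem_toFinset, mem_roots hf0] at hxr hyr
        exact exists_isRoot_derivative_mem_Ioo hxy (hxr.eq_zero.trans hyr.eq_zero.symm)
  rw [Finset.card_insert_of_notMem hE, hroots] at hcard
  have := (Multiset.toFinset_card_le _).trans (card_roots' f.derivative)
  have := natDegree_derivative_le f
  omega

theorem exists_band {c r : ℝ} (hdeg : 0 < f.degree) (hr : |f.eval r| < c) :
    ∃ a b, a < r ∧ r < b ∧ |f.eval a| = c ∧ |f.eval b| = c ∧
      ∀ x ∈ Ioo a b, |f.eval x| < c := by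
  have hcont : Continuous fun x => |f.eval x| := f.continuous.abs
  obtain ⟨x₁, hx₁, hr₁⟩ :=
    ((f.abs_tendsto_atTop hdeg).eventually_ge_atTop c |>.and (eventually_ge_atTop r)).exists
  obtain ⟨b, hrb, hb, hlt_b⟩ := exists_first_hit hcont hr hr₁ hx₁
  obtain ⟨x₂, hx₂, hr₂⟩ := (((f.abs_tendsto_atBot hdeg).comp tendsto_neg_atTop_atBot)
    |>.eventually_ge_atTop c |>.and (eventually_ge_atTop (-r))).exists
  obtain ⟨a, hra, ha, hlt_a⟩ :=
    exists_first_hit (hcont.comp continuous_neg) (by simpa using hr) hr₂ hx₂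
  refine ⟨-a, b, by linarith, hrb, ha, hb, fun x hx => ?_⟩
  rcases le_total r x with h | h
  · exact hlt_b x ⟨h, hx.2⟩
  · simpa using hlt_a (-x) ⟨neg_le_neg h, by linarith [hx.1]⟩

theorem exists_bands {c : ℝ} (hc : 0 < c) (hdeg : 0 < f.natDegree)
    (hroots : f.roots.toFinset.card = f.natDegree)
    (hcrit : ∀ x, |f.eval x| < c → ¬ f.derivative.IsRoot x) :
    ∃ a b : Fin f.natDegree → ℝ, (∀ i, a i < b i) ∧
      {x | |f.eval x| ≤ c} = ⋃ i, Icc (a i) (b i) ∧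
      (∀ i, StrictMonoOn (f.eval ·) (Icc (a i) (b i)) ∨
        StrictAntiOn (f.eval ·) (Icc (a i) (b i))) ∧
      ∀ i, (f.eval ·) '' Icc (a i) (b i) = Icc (-c) c := by
  have hf0 : f ≠ 0 := ne_zero_of_natDegree_gt hdeg
  have hroot : ∀ r ∈ f.roots.toFinset, f.eval r = 0 := fun r hr =>
    ((mem_roots hf0).mp (Multiset.mem_toFinset.mp hr)).eq_zero
  choose A B hAr hrB hA hB hAB using fun r : f.roots.toFinset =>
    exists_band (natDegree_pos_iff_degree_pos.mp hdeg) (c := c)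
      (by rw [hroot r r.2, abs_zero]; exact hc)
  have hmono : ∀ r, StrictMonoOn (f.eval ·) (Icc (A r) (B r)) ∨
      StrictAntiOn (f.eval ·) (Icc (A r) (B r)) := fun r =>
    strictMonoOn_or_strictAntiOn_Icc ((hAr r).trans (hrB r)).le fun x hx => hcrit x (hAB r x hx)
  have hcover : ∀ x, |f.eval x| ≤ c → ∃ r, x ∈ Icc (A r) (B r) := by
    intro x hx
    obtain ⟨r, hr, hcrit'⟩ := exists_mem_roots_forall_not_isRoot_derivative hdeg hroots x
    have hsmall : ∀ y ∈ uIcc r x, y ≠ x → |f.eval y| < c := fun y hy hyx =>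
      (abs_lt_abs_of_mem_uIcc (strictMonoOn_or_strictAntiOn_Icc inf_le_sup hcrit')
        (hroot r hr) hy hyx).trans_le hx
    refine ⟨⟨r, hr⟩, le_of_not_gt fun hxA => ?_, le_of_not_gt fun hBx => ?_⟩
    · exact (hA _).not_lt (hsmall _ (mem_uIcc_of_ge hxA.le (hAr ⟨r, hr⟩).le) hxA.ne')
    · exact (hB _).not_lt (hsmall _ (mem_uIcc_of_le (hrB ⟨r, hr⟩).le hBx.le) hBx.ne)
  have himg : ∀ r, (f.eval ·) '' Icc (A r) (B r) = Icc (-c) c := fun r =>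
    image_Icc_eq_Icc_of_abs_eq ((hAr r).trans (hrB r)) f.continuousOn
      ((hmono r).elim StrictMonoOn.injOn StrictAntiOn.injOn) (hA r) (hB r) (hAB r)
  let e := (f.roots.toFinset.orderIsoOfFin hroots).toEquiv
  refine ⟨fun i => A (e i), fun i => B (e i), fun i => (hAr _).trans (hrB _), ?_,
    fun i => hmono _, fun i => himg _⟩
  ext x
  refine ⟨fun hx => ?_, fun hx => ?_⟩
  · obtain ⟨r, hr⟩ := hcover x hx
    exact mem_iUnion.mpr ⟨e.symm r, by simpa using hr⟩
  · obtain ⟨i, hi⟩ := mem_iUnion.mp hx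
    exact abs_le.mpr (himg _ ▸ mem_image_of_mem _ hi)

end Polynomial

theorem statement10_general
    (p : ℕ) (hp : 1 ≤ p) (V : ℤ → ℝ) :
    ∃ a b : Fin p → ℝ, (∀ i, a i < b i) ∧
      {E : ℝ | |discriminant V p E| ≤ 2} = ⋃ i, Set.Icc (a i) (b i) ∧
      (∀ i, StrictMonoOn (discriminant V p) (Set.Icc (a i) (b i)) ∨
            StrictAntiOn (discriminant V p) (Set.Icc (a i) (b i))) ∧
      (∀ i, discriminant V p '' Set.Icc (a i) (b i) = Set.Icc (-2 : ℝ) 2) := by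
  have hp0 : p ≠ 0 := Nat.one_le_iff_ne_zero.mp hp
  have hdeg := natDegree_discriminantPoly V hp0
  have hroots := card_roots_toFinset_eq_natDegree (ne_zero_of_natDegree_gt (n := 0) (by omega))
    (fun z hz => im_eq_zero_of_aeval_discriminantPoly_eq_zero V hp0 hz)
    fun E hE => not_isRoot_derivative_discriminantPoly V hp0 (by simp [hE.eq_zero])
  have hbands := exists_bands two_pos (by omega) hroots
    fun E hE => not_isRoot_derivative_discriminantPoly V hp0 hE
  rw [hdeg] at hbands
  rw [discriminant_eq_eval]
  exact hbands

/-- For a `p`-periodic potential `V` (`p ≥ 1`) with discriminant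
`Δ`, the set `{E : |Δ(E)| ≤ 2}` is a union of `p` closed intervals with
nonempty interior (the bands) such that on each band `Δ` is strictly monotone
(increasing or decreasing) and `Δ` maps each band onto `[-2, 2]`. -/
theorem statement10
    (p : ℕ) (hp : 1 ≤ p) (V : ℤ → ℝ) (hV : ∀ n : ℤ, V (n + p) = V n) :
    ∃ a b : Fin p → ℝ, (∀ i, a i < b i) ∧
      {E : ℝ | |discriminant V p E| ≤ 2} = ⋃ i, Set.Icc (a i) (b i) ∧
      (∀ i, StrictMonoOn (discriminant V p) (Set.Icc (a i) (b i)) ∨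
            StrictAntiOn (discriminant V p) (Set.Icc (a i) (b i))) ∧
      (∀ i, discriminant V p '' Set.Icc (a i) (b i) = Set.Icc (-2 : ℝ) 2) :=
  statement10_general p hp V
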